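/- Let α, β ≥ 0 with α + β ≥ 2, and let a, b : ℤ² → ℂ be such that k ↦ (1 + ‖k‖²)^{β/2}|a(k)|² and k ↦ (1 + ‖k‖²)^{α/2}|b(k)|² are summable over ℤ². Then k ↦ |k₁|·|a(k)|·|b(k)| is summable and ∑_{k∈ℤ²} |k₁|·|a(k)|·|b(k)| ≤ (∑_{k∈ℤ²} (1 + ‖k‖²)^{β/2}|a(k)|²)^{1/2} · (∑_{k∈ℤ²} (1 + ‖k‖²)^{α/2}|b(k)|²)^{1/2}. -/

import Mathlib

/-!
Since `α/2 + β/2 ≥ 1`, the multiplier is dominated pointwise by the weights: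
`k₁² ≤ (1 + ‖k‖²)^{β/2} (1 + ‖k‖²)^{α/2}`. The estimate is then the Cauchy–Schwarz inequality
for the sequences `(1 + ‖k‖²)^{β/4} |a(k)|` and `(1 + ‖k‖²)^{α/4} |b(k)|`.
-/

theorem Real.summable_and_tsum_mul_mul_le_of_sq_le {ι : Type*} {m u v f g : ι → ℝ}
    (hu : ∀ i, 0 ≤ u i) (hv : ∀ i, 0 ≤ v i) (hmuv : ∀ i, m i ^ 2 ≤ u i * v i)
    (hf : ∀ i, 0 ≤ f i) (hg : ∀ i, 0 ≤ g i)
    (hfu : Summable fun i => u i * f i ^ 2) (hgv : Summable fun i => v i * g i ^ 2) :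
    (Summable fun i => m i * f i * g i) ∧
      ∑' i, m i * f i * g i ≤
        (∑' i, u i * f i ^ 2) ^ ((1 : ℝ) / 2) * (∑' i, v i * g i ^ 2) ^ ((1 : ℝ) / 2) := by
  have hsq : ∀ {w h : ι → ℝ}, (∀ i, 0 ≤ w i) →
      (fun i => (√(w i) * h i) ^ (2 : ℝ)) = fun i => w i * h i ^ 2 := fun hw => by
    ext i
    rw [Real.rpow_two, mul_pow, Real.sq_sqrt (hw i)]
  obtain ⟨hsum, hle⟩ := Real.summable_and_inner_le_Lp_mul_Lq_tsum_of_nonneg .two_two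
    (fun i => mul_nonneg (Real.sqrt_nonneg _) (hf i))
    (fun i => mul_nonneg (Real.sqrt_nonneg _) (hg i))
    ((hsq hu).symm ▸ hfu) ((hsq hv).symm ▸ hgv)
  rw [hsq hu, hsq hv] at hle
  have hbound : ∀ i, ‖m i * f i * g i‖ ≤ √(u i) * f i * (√(v i) * g i) := fun i => by
    have hm : |m i| ≤ √(u i) * √(v i) := by
      rw [← Real.sqrt_mul (hu i)]
      exact Real.abs_le_sqrt (hmuv i)
    rw [Real.norm_eq_abs, abs_mul, abs_mul, abs_of_nonneg (hf i), abs_of_nonneg (hg i)]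
    calc |m i| * f i * g i ≤ √(u i) * √(v i) * f i * g i := by
          gcongr
          exacts [hg i, hf i]
      _ = √(u i) * f i * (√(v i) * g i) := by ring
  have hsum' : Summable fun i => m i * f i * g i := .of_norm_bounded hsum hbound
  refine ⟨hsum', ?_⟩
  calc ∑' i, m i * f i * g i ≤ ∑' i, √(u i) * f i * (√(v i) * g i) :=
        hsum'.tsum_le_tsum (fun i => (le_abs_self _).trans (hbound i)) hsum
    _ ≤ _ := hle

theorem sq_le_rpow_mul_rpow_of_one_le_add (x y : ℝ) {s t : ℝ} (hst : 1 ≤ s + t) :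
    x ^ 2 ≤ (1 + (x ^ 2 + y ^ 2)) ^ s * (1 + (x ^ 2 + y ^ 2)) ^ t := by
  have hw : 1 ≤ 1 + (x ^ 2 + y ^ 2) := le_add_of_nonneg_right (by positivity)
  rw [← Real.rpow_add (by positivity)]
  calc x ^ 2 ≤ (1 + (x ^ 2 + y ^ 2)) ^ (1 : ℝ) := by rw [Real.rpow_one]; nlinarith [sq_nonneg y]
    _ ≤ _ := Real.rpow_le_rpow_of_exponent_le hw hst

theorem duality_estimate_fourier_general (α β : ℝ)
    (hαβ : 2 ≤ α + β) (a b : ℤ × ℤ → ℂ)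
    (ha : Summable (fun k : ℤ × ℤ =>
      (1 + ((k.1 : ℝ) ^ 2 + (k.2 : ℝ) ^ 2)) ^ (β / 2) * ‖a k‖ ^ 2))
    (hb : Summable (fun k : ℤ × ℤ =>
      (1 + ((k.1 : ℝ) ^ 2 + (k.2 : ℝ) ^ 2)) ^ (α / 2) * ‖b k‖ ^ 2)) :
    Summable (fun k : ℤ × ℤ =>
      |(k.1 : ℝ)| * ‖a k‖ * ‖b k‖) ∧
    (∑' k : ℤ × ℤ, |(k.1 : ℝ)| * ‖a k‖ * ‖b k‖) ≤
      (∑' k : ℤ × ℤ,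
          (1 + ((k.1 : ℝ) ^ 2 + (k.2 : ℝ) ^ 2)) ^ (β / 2) * ‖a k‖ ^ 2)
            ^ ((1 : ℝ) / 2) *
      (∑' k : ℤ × ℤ,
          (1 + ((k.1 : ℝ) ^ 2 + (k.2 : ℝ) ^ 2)) ^ (α / 2) * ‖b k‖ ^ 2)
            ^ ((1 : ℝ) / 2) :=
  Real.summable_and_tsum_mul_mul_le_of_sq_le (fun _ => by positivity) (fun _ => by positivity)
    (fun k => by
      rw [sq_abs]
      exact sq_le_rpow_mul_rpow_of_one_le_add _ _ (by linarith))
    (fun _ => norm_nonneg _) (fun _ => norm_nonneg _) ha hb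

/-- Fourier-coefficient form of the duality estimate
`∫ ∂₁θ · ω ≤ ‖θ‖_{H^{β/2}} ‖ω‖_{H^{α/2}}` valid when `α/2 + β/2 ≥ 1`
(estimate (38) in the paper). -/
theorem duality_estimate_fourier (α β : ℝ) (hα : 0 ≤ α) (hβ : 0 ≤ β)
    (hαβ : 2 ≤ α + β) (a b : ℤ × ℤ → ℂ)
    (ha : Summable (fun k : ℤ × ℤ =>
      (1 + ((k.1 : ℝ) ^ 2 + (k.2 : ℝ) ^ 2)) ^ (β / 2) * ‖a k‖ ^ 2))
    (hb : Summable (fun k : ℤ × ℤ =>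
      (1 + ((k.1 : ℝ) ^ 2 + (k.2 : ℝ) ^ 2)) ^ (α / 2) * ‖b k‖ ^ 2)) :
    Summable (fun k : ℤ × ℤ =>
      |(k.1 : ℝ)| * ‖a k‖ * ‖b k‖) ∧
    (∑' k : ℤ × ℤ, |(k.1 : ℝ)| * ‖a k‖ * ‖b k‖) ≤
      (∑' k : ℤ × ℤ,
          (1 + ((k.1 : ℝ) ^ 2 + (k.2 : ℝ) ^ 2)) ^ (β / 2) * ‖a k‖ ^ 2)
            ^ ((1 : ℝ) / 2) *
      (∑' k : ℤ × ℤ,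
          (1 + ((k.1 : ℝ) ^ 2 + (k.2 : ℝ) ^ 2)) ^ (α / 2) * ‖b k‖ ^ 2)
            ^ ((1 : ℝ) / 2) :=
  duality_estimate_fourier_general α β hαβ a b ha hb
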